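/- Let P and Q be probability measures on a measurable space 𝒳 with P absolutely continuous with respect to Q, let r = dP/dQ, fix α, β, γ > 0, and set f*(x) = (r(x) − α)/(β r(x) + γ). Then for every measurable f : 𝒳 → ℝ with f ∈ L²(P) ∩ L²(Q), the exact quadratic expansion J(f*) − J(f) = (β/2) E_P[(f − f*)²] + (γ/2) E_Q[(f − f*)²] holds, where J(g) = E_P[g] − α E_Q[g] − (β/2) E_P[g²] − (γ/2) E_Q[g²]. Consequently the maximizer of J is unique up to (P + Q)-almost-everywhere equality. -/

import Mathlib

open MeasureTheory

/-- The RPC functional `J(g) = E_P[g] - α E_Q[g] - (β/2) E_P[g²] - (γ/2) E_Q[g²]`. -/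
noncomputable def rpcJ {X : Type*} [MeasurableSpace X] (P Q : Measure X) (α β γ : ℝ)
    (g : X → ℝ) : ℝ :=
  (∫ x, g x ∂P) - α * (∫ x, g x ∂Q) - β / 2 * (∫ x, (g x) ^ 2 ∂P)
    - γ / 2 * (∫ x, (g x) ^ 2 ∂Q)

/-- The relative density ratio `f*(x) = (r(x) - α)/(β r(x) + γ)` with `r = dP/dQ`. -/
noncomputable def relRatio {X : Type*} [MeasurableSpace X] (P Q : Measure X) (α β γ : ℝ)
    (x : X) : ℝ :=
  ((P.rnDeriv Q x).toReal - α) / (β * (P.rnDeriv Q x).toReal + γ)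

/-!
`J` is a concave quadratic functional, so `J(f*) - J(f)` equals its quadratic part
`(β/2) E_P[(f - f*)²] + (γ/2) E_Q[(f - f*)²]` minus the first variation of `J` at `f*` in the
direction `f - f*`. That first variation is `E_P[(1 - β f*) h] - E_Q[(α + γ f*) h]`, and it
vanishes for every `h`: rewriting `E_P` as `E_Q[r ·]`, the identity `r (1 - β f*) = α + γ f*`
is the defining equation `(β r + γ) f* = r - α` of `f*`. Equality `J(f) = J(f*)` then forces
`f = f*` almost everywhere for `Q`, hence for `P ≪ Q`.
-/

section QuadraticFunctional

variable {X : Type*} [MeasurableSpace X]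

noncomputable def quadFunctional (μ : Measure X) (a b : ℝ) (g : X → ℝ) : ℝ :=
  a * ∫ x, g x ∂μ - b / 2 * ∫ x, g x ^ 2 ∂μ

theorem rpcJ_eq_quadFunctional_add (P Q : Measure X) (α β γ : ℝ) (g : X → ℝ) :
    rpcJ P Q α β γ g = quadFunctional P 1 β g + quadFunctional Q (-α) γ g := by
  unfold rpcJ quadFunctional
  ring

theorem quadFunctional_sub {μ : Measure X} [IsFiniteMeasure μ] (a b : ℝ) {f g : X → ℝ}
    (hf : MemLp f 2 μ) (hg : MemLp g 2 μ) :
    quadFunctional μ a b g - quadFunctional μ a b f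
      = b / 2 * ∫ x, (f x - g x) ^ 2 ∂μ - ∫ x, (a - b * g x) * (f x - g x) ∂μ := by
  have hlin : Integrable (fun x ↦ (a - b * g x) * (f x - g x)) μ :=
    ((memLp_const a).sub (hg.const_mul b)).integrable_mul (hf.sub hg)
  have hsq : Integrable (fun x ↦ (f x - g x) ^ 2) μ := (hf.sub hg).integrable_sq
  have hquad : ∀ {h : X → ℝ}, MemLp h 2 μ →
      Integrable (fun x ↦ a * h x - b / 2 * h x ^ 2) μ := fun hh ↦
    ((hh.integrable one_le_two).const_mul a).sub (hh.integrable_sq.const_mul (b / 2))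
  calc quadFunctional μ a b g - quadFunctional μ a b f
      = ∫ x, (a * g x - b / 2 * g x ^ 2) - (a * f x - b / 2 * f x ^ 2) ∂μ := by
        rw [integral_sub (hquad hg) (hquad hf),
          integral_sub ((hg.integrable one_le_two).const_mul a) (hg.integrable_sq.const_mul _),
          integral_sub ((hf.integrable one_le_two).const_mul a) (hf.integrable_sq.const_mul _)]
        simp only [integral_const_mul, quadFunctional]
    _ = ∫ x, b / 2 * (f x - g x) ^ 2 - (a - b * g x) * (f x - g x) ∂μ :=
        integral_congr_ae (Filter.Eventually.of_forall fun x ↦ by ring)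
    _ = b / 2 * ∫ x, (f x - g x) ^ 2 ∂μ - ∫ x, (a - b * g x) * (f x - g x) ∂μ := by
        rw [integral_sub (hsq.const_mul _) hlin, integral_const_mul]

end QuadraticFunctional

section RelativeRatio

theorem mul_one_sub_mul_sub_div_eq {r α β γ : ℝ} (h : β * r + γ ≠ 0) :
    r * (1 - β * ((r - α) / (β * r + γ))) = α + γ * ((r - α) / (β * r + γ)) := by
  linear_combination -div_mul_cancel₀ (r - α) h

theorem abs_sub_div_mul_add_le {r α β γ : ℝ} (hr : 0 ≤ r) (hβ : 0 < β) (hγ : 0 < γ) :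
    |(r - α) / (β * r + γ)| ≤ 1 / β + |α| / γ := by
  have hden : 0 < β * r + γ := by positivity
  have hbound : (1 / β + |α| / γ) * (β * r + γ) = r + |α| + γ / β + β / γ * |α| * r := by
    field_simp
    ring
  rw [abs_div, abs_of_pos hden, div_le_iff₀ hden, hbound]
  have : 0 ≤ γ / β + β / γ * |α| * r := by positivity
  linarith [abs_sub r α, abs_of_nonneg hr]

variable {X : Type*} [MeasurableSpace X] (P Q : Measure X) (α : ℝ)

theorem measurable_relRatio (β γ : ℝ) : Measurable (relRatio P Q α β γ) := by
  have hr := (Measure.measurable_rnDeriv P Q).ennreal_toReal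
  exact (hr.sub measurable_const).div ((measurable_const.mul hr).add measurable_const)

variable {β γ : ℝ}

theorem abs_relRatio_le (hβ : 0 < β) (hγ : 0 < γ) (x : X) :
    |relRatio P Q α β γ x| ≤ 1 / β + |α| / γ :=
  abs_sub_div_mul_add_le ENNReal.toReal_nonneg hβ hγ

theorem memLp_relRatio (hβ : 0 < β) (hγ : 0 < γ) (μ : Measure X) [IsFiniteMeasure μ]
    (p : ENNReal) : MemLp (relRatio P Q α β γ) p μ :=
  MemLp.of_bound (measurable_relRatio P Q α β γ).aestronglyMeasurable _
    (Filter.Eventually.of_forall (abs_relRatio_le P Q α hβ hγ))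

theorem integral_one_sub_mul_relRatio_mul [SigmaFinite P] [SigmaFinite Q] (hPQ : P ≪ Q)
    (hβ : 0 ≤ β) (hγ : 0 < γ) (h : X → ℝ) :
    ∫ x, (1 - β * relRatio P Q α β γ x) * h x ∂P
      = ∫ x, (α + γ * relRatio P Q α β γ x) * h x ∂Q := by
  rw [← integral_rnDeriv_smul hPQ]
  refine integral_congr_ae (Filter.Eventually.of_forall fun x ↦ ?_)
  have hden : β * (P.rnDeriv Q x).toReal + γ ≠ 0 := by
    have := ENNReal.toReal_nonneg (a := P.rnDeriv Q x)
    positivity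
  simp only [smul_eq_mul, ← mul_assoc, relRatio, mul_one_sub_mul_sub_div_eq hden]

end RelativeRatio

theorem ae_eq_of_integral_sq_sub_eq_zero {X : Type*} [MeasurableSpace X] {μ : Measure X}
    {f g : X → ℝ} (hint : Integrable (fun x ↦ (f x - g x) ^ 2) μ)
    (hzero : ∫ x, (f x - g x) ^ 2 ∂μ = 0) : f =ᵐ[μ] g := by
  filter_upwards [(integral_eq_zero_iff_of_nonneg (fun x ↦ sq_nonneg _) hint).mp hzero]
    with x hx
  exact sub_eq_zero.mp (pow_eq_zero_iff two_ne_zero |>.mp hx)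

theorem rpc_quadratic_expansion_general {X : Type*} [MeasurableSpace X] (P Q : Measure X)
    [IsProbabilityMeasure P] [IsProbabilityMeasure Q] (hPQ : P ≪ Q)
    (α β γ : ℝ) (hβ : 0 < β) (hγ : 0 < γ)
    (f : X → ℝ) (hf2P : MemLp f 2 P) (hf2Q : MemLp f 2 Q) :
    rpcJ P Q α β γ (relRatio P Q α β γ) - rpcJ P Q α β γ f
      = β / 2 * (∫ x, (f x - relRatio P Q α β γ x) ^ 2 ∂P)
        + γ / 2 * (∫ x, (f x - relRatio P Q α β γ x) ^ 2 ∂Q) ∧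
    (rpcJ P Q α β γ f = rpcJ P Q α β γ (relRatio P Q α β γ) →
      f =ᵐ[P + Q] relRatio P Q α β γ) := by
  set g := relRatio P Q α β γ with hg
  have hexp : rpcJ P Q α β γ g - rpcJ P Q α β γ f
      = β / 2 * (∫ x, (f x - g x) ^ 2 ∂P) + γ / 2 * (∫ x, (f x - g x) ^ 2 ∂Q) := by
    have hvar : ∫ x, (1 - β * g x) * (f x - g x) ∂P
        = -∫ x, (-α - γ * g x) * (f x - g x) ∂Q := by
      rw [integral_one_sub_mul_relRatio_mul P Q α hPQ hβ.le hγ, ← integral_neg]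
      congr with x
      ring
    simp only [rpcJ_eq_quadFunctional_add]
    rw [add_sub_add_comm, quadFunctional_sub _ _ hf2P (memLp_relRatio P Q α hβ hγ P 2),
      quadFunctional_sub _ _ hf2Q (memLp_relRatio P Q α hβ hγ Q 2), ← hg, hvar]
    ring
  refine ⟨hexp, fun hJ ↦ ?_⟩
  have hsqQ : Integrable (fun x ↦ (f x - g x) ^ 2) Q :=
    (hf2Q.sub (memLp_relRatio P Q α hβ hγ Q 2)).integrable_sq
  have hQ : f =ᵐ[Q] g := by
    refine ae_eq_of_integral_sq_sub_eq_zero hsqQ ?_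
    have hP0 : 0 ≤ ∫ x, (f x - g x) ^ 2 ∂P := integral_nonneg fun x ↦ sq_nonneg _
    have hQ0 : 0 ≤ ∫ x, (f x - g x) ^ 2 ∂Q := integral_nonneg fun x ↦ sq_nonneg _
    rw [hJ, sub_self] at hexp
    nlinarith
  exact ae_add_measure_iff.mpr ⟨hPQ.ae_le hQ, hQ⟩

/-- Quadratic-expansion form of Lemma 1: for probability measures `P ≪ Q`,
relative parameters `α, β, γ > 0`, and any measurable `f ∈ L²(P) ∩ L²(Q)`,
`J(f*) - J(f) = (β/2) E_P[(f - f*)²] + (γ/2) E_Q[(f - f*)²]`; consequently the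
maximizer of `J` is unique up to `(P + Q)`-a.e. equality. -/
theorem rpc_quadratic_expansion {X : Type*} [MeasurableSpace X] (P Q : Measure X)
    [IsProbabilityMeasure P] [IsProbabilityMeasure Q] (hPQ : P ≪ Q)
    (α β γ : ℝ) (hα : 0 < α) (hβ : 0 < β) (hγ : 0 < γ)
    (f : X → ℝ) (hf : Measurable f) (hf2P : MemLp f 2 P) (hf2Q : MemLp f 2 Q) :
    rpcJ P Q α β γ (relRatio P Q α β γ) - rpcJ P Q α β γ f
      = β / 2 * (∫ x, (f x - relRatio P Q α β γ x) ^ 2 ∂P)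
        + γ / 2 * (∫ x, (f x - relRatio P Q α β γ x) ^ 2 ∂Q) ∧
    (rpcJ P Q α β γ f = rpcJ P Q α β γ (relRatio P Q α β γ) →
      f =ᵐ[P + Q] relRatio P Q α β γ) :=
  rpc_quadratic_expansion_general P Q hPQ α β γ hβ hγ f hf2P hf2Q
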